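/- arXiv:1902.07002 — 4 statements merged into one kernel-verified Lean document; each statement's English description precedes it below -/
import Mathlib

section
/- Let R be a commutative Artinian local ring with maximal ideal m, let G be a group, and let X be an R-module equipped with an R-linear action of G that is free as an R-module. Fix a non-negative integer i. If the group cohomology H^i(G, X/mX) vanishes, then H^i(G, X) vanishes. -/
/-!
By well-founded induction on the ideal `J`, every `i`-cocycle of `X` with values in `J • X` is
a coboundary. For `J ≠ 0` pick `K ⋖ J` and `t ∈ J \ K`: then `J = K + R t` and, `R`
being local, `r t ∈ K ↔ r ∈ m`, so for free `X` we get `t • x ∈ K X ↔ x ∈ m X`. Write the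
cocycle as `c = t • c₀ + c'` with `c'` valued in `K X`. The cocycle condition forces `d c₀` to be
valued in `m X`, so the image of `c₀` in `X/mX` is a cocycle, hence a coboundary `d b̄`. Lifting
`b̄` to `b`, the cocycle `c - d (t • b)` is valued in `K X`, and induction applies.
-/

open CategoryTheory groupCohomology

universe u

namespace Module.Basis

variable {ι R M : Type*} [CommRing R] [AddCommGroup M] [Module R M]

theorem mem_ideal_smul_top_iff (b : Basis ι R M) {I : Ideal R} {x : M} :
    x ∈ I • (⊤ : Submodule R M) ↔ ∀ i, b.repr x i ∈ I := by
  rw [← b.span_eq, Submodule.mem_ideal_smul_span_iff_exists_sum]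
  constructor
  · rintro ⟨a, ha, rfl⟩
    simpa only [← Finsupp.linearCombination_apply, b.repr_linearCombination] using ha
  · exact fun h => ⟨b.repr x, h, b.linearCombination_repr x⟩

theorem smul_mem_ideal_smul_top_iff (b : Basis ι R M) {I K : Ideal R} {t : R}
    (ht : ∀ r, r * t ∈ K ↔ r ∈ I) {x : M} :
    t • x ∈ K • (⊤ : Submodule R M) ↔ x ∈ I • (⊤ : Submodule R M) := by
  simp only [b.mem_ideal_smul_top_iff, map_smul, Finsupp.smul_apply, smul_eq_mul, mul_comm t, ht]

end Module.Basis

namespace Ideal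

variable {R : Type*} [CommRing R] {K J : Ideal R} {t : R}

theorem sup_span_singleton_eq_of_covBy (h : K ⋖ J) (htJ : t ∈ J) (htK : t ∉ K) :
    K ⊔ span {t} = J :=
  (h.eq_or_eq le_sup_left (sup_le h.le ((span_singleton_le_iff_mem _).mpr htJ))).resolve_left
    fun heq => htK (heq ▸ mem_sup_right (mem_span_singleton_self t))

theorem mul_mem_iff_mem_maximalIdeal_of_covBy [IsLocalRing R] (h : K ⋖ J) (htJ : t ∈ J)
    (htK : t ∉ K) (r : R) : r * t ∈ K ↔ r ∈ IsLocalRing.maximalIdeal R := by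
  constructor
  · intro hrt
    by_contra hr
    obtain ⟨u, rfl⟩ := IsLocalRing.notMem_maximalIdeal.mp hr
    exact htK (by simpa using K.mul_mem_left (↑u⁻¹) hrt)
  · intro hr
    by_contra hrt
    have ht : t ∈ K ⊔ span {r * t} :=
      (sup_span_singleton_eq_of_covBy h (J.mul_mem_left r htJ) hrt).symm ▸ htJ
    obtain ⟨k, hk, _, hs, hkst⟩ := Submodule.mem_sup.mp ht
    obtain ⟨s, rfl⟩ := mem_span_singleton'.mp hs
    have hk' : (1 - s * r) * t ∈ K := by
      convert hk using 1
      linear_combination -hkst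
    obtain ⟨v, hv⟩ := IsLocalRing.isUnit_one_sub_self_of_mem_nonunits _
      ((IsLocalRing.mem_maximalIdeal _).mp ((IsLocalRing.maximalIdeal R).mul_mem_left s hr))
    exact htK (by simpa [← hv] using K.mul_mem_left (↑v⁻¹) hk')

theorem exists_covBy_of_ne_bot [IsNoetherianRing R] (hJ : J ≠ ⊥) : ∃ K, K ⋖ J :=
  (exists_le_covBy_of_lt (bot_lt_iff_ne_bot.mpr hJ)).imp fun _ h => h.2

end Ideal

namespace groupCohomology

variable {R G : Type u} [CommRing R] [Group G]

def cochainsIn (A : Rep R G) (N : Submodule R A) (n : ℕ) :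
    Submodule R ((inhomogeneousCochains A).X n) :=
  Submodule.pi Set.univ fun _ => N

variable {A B : Rep R G}

theorem mem_cochainsIn {N : Submodule R A} {n : ℕ} {c : (inhomogeneousCochains A).X n} :
    c ∈ cochainsIn A N n ↔ ∀ g, c g ∈ N := by
  simp [cochainsIn]

theorem cochainsIn_top (n : ℕ) : cochainsIn A ⊤ n = ⊤ :=
  Submodule.pi_top _

theorem cochainsIn_bot (n : ℕ) : cochainsIn A ⊥ n = ⊥ :=
  Submodule.pi_univ_bot

theorem ker_cochainsMap_f (f : A ⟶ B) (n : ℕ) :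
    LinearMap.ker ((cochainsMap (MonoidHom.id G) f).f n).hom =
      cochainsIn A (LinearMap.ker f.hom.toLinearMap) n := by
  rw [cochainsMap_id_f_hom_eq_compLeft, LinearMap.ker_compLeft]
  rfl

theorem surjective_cochainsMap_f {f : A ⟶ B} (hf : Function.Surjective f.hom) (n : ℕ) :
    Function.Surjective ((cochainsMap (MonoidHom.id G) f).f n).hom :=
  hf.comp_left

theorem cochainsMap_f_d_apply (f : A ⟶ B) (i j : ℕ) (c : (inhomogeneousCochains A).X i) :
    ((cochainsMap (MonoidHom.id G) f).f j).hom (((inhomogeneousCochains A).d i j).hom c) =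
      ((inhomogeneousCochains B).d i j).hom (((cochainsMap (MonoidHom.id G) f).f i).hom c) :=
  (ConcreteCategory.congr_hom ((cochainsMap (MonoidHom.id G) f).comm i j) c).symm

theorem d_d_apply (i j k : ℕ) (c : (inhomogeneousCochains A).X i) :
    ((inhomogeneousCochains A).d j k).hom (((inhomogeneousCochains A).d i j).hom c) = 0 :=
  ConcreteCategory.congr_hom ((inhomogeneousCochains A).d_comp_d i j k) c

theorem d_mem_cochainsIn {N : Submodule R A} (hN : ∀ g, N.map (A.ρ g) ≤ N) {i j : ℕ}
    {c : (inhomogeneousCochains A).X i} (hc : c ∈ cochainsIn A N i) :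
    ((inhomogeneousCochains A).d i j).hom c ∈ cochainsIn A N j := by
  rcases eq_or_ne (i + 1) j with rfl | hij
  · rw [mem_cochainsIn] at hc ⊢
    intro g
    rw [inhomogeneousCochains.d_def, inhomogeneousCochains.d_hom_apply]
    exact N.add_mem (hN _ (Submodule.mem_map_of_mem (hc _)))
      (N.sum_mem fun _ _ => N.smul_mem _ (hc _))
  · rw [(inhomogeneousCochains A).shape i j (by simpa using hij)]
    exact zero_mem _

theorem map_ρ_ideal_smul_top_le (I : Ideal R) (g : G) :
    (I • ⊤ : Submodule R A).map (A.ρ g) ≤ I • ⊤ := by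
  rw [Submodule.map_smul'']
  exact Submodule.smul_mono le_rfl le_top

theorem exists_sub_smul_mem_cochainsIn {K : Ideal R} {t : R} {n : ℕ}
    {c : (inhomogeneousCochains A).X n} (hc : c ∈ cochainsIn A ((K ⊔ Ideal.span {t}) • ⊤) n) :
    ∃ c₀ : (inhomogeneousCochains A).X n, c - t • c₀ ∈ cochainsIn A (K • ⊤) n := by
  have h g : ∃ y, c g - t • y ∈ (K • ⊤ : Submodule R A) := by
    have := mem_cochainsIn.mp hc g
    rw [Submodule.sup_smul, Submodule.ideal_span_singleton_smul] at this
    obtain ⟨z, hz, _, ⟨y, -, rfl⟩, hzy⟩ := Submodule.mem_sup.mp this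
    exact ⟨y, by rw [← hzy]; simpa using hz⟩
  choose c₀ hc₀ using h
  exact ⟨c₀, mem_cochainsIn.mpr hc₀⟩

theorem smul_mem_cochainsIn_iff {ι : Type*} (b : Module.Basis ι R A) {I K : Ideal R} {t : R}
    (ht : ∀ r, r * t ∈ K ↔ r ∈ I) {n : ℕ} {c : (inhomogeneousCochains A).X n} :
    t • c ∈ cochainsIn A (K • ⊤) n ↔ c ∈ cochainsIn A (I • ⊤) n := by
  rw [mem_cochainsIn, mem_cochainsIn]
  exact forall_congr' fun g => b.smul_mem_ideal_smul_top_iff ht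

theorem subsingleton_groupCohomology_iff (A : Rep R G) (i : ℕ) :
    Subsingleton (groupCohomology A i) ↔
      LinearMap.ker ((inhomogeneousCochains A).d i (i + 1)).hom ≤
        LinearMap.range ((inhomogeneousCochains A).d (i - 1) i).hom := by
  rw [← ModuleCat.isZero_iff_subsingleton, groupCohomology,
    ← HomologicalComplex.exactAt_iff_isZero_homology,
    HomologicalComplex.exactAt_iff' _ (i - 1) i (i + 1) (by cases i <;> simp) (by simp),
    ShortComplex.moduleCat_exact_iff_ker_sub_range]
  rfl

variable {X Y : Rep R G} {ι : Type*} {f : X ⟶ Y} {j i k : ℕ}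

theorem ker_inf_cochainsIn_sup_span_singleton_le_range (b : Module.Basis ι R X)
    (hsurj : Function.Surjective f.hom) {I : Ideal R}
    (hker : LinearMap.ker f.hom.toLinearMap = I • ⊤)
    (hY : LinearMap.ker ((inhomogeneousCochains Y).d i k).hom ≤
      LinearMap.range ((inhomogeneousCochains Y).d j i).hom) {K : Ideal R} {t : R}
    (ht : ∀ r, r * t ∈ K ↔ r ∈ I)
    (hK : LinearMap.ker ((inhomogeneousCochains X).d i k).hom ⊓ cochainsIn X (K • ⊤) i ≤
      LinearMap.range ((inhomogeneousCochains X).d j i).hom) :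
    LinearMap.ker ((inhomogeneousCochains X).d i k).hom ⊓
        cochainsIn X ((K ⊔ Ideal.span {t}) • ⊤) i ≤
      LinearMap.range ((inhomogeneousCochains X).d j i).hom := by
  have hkerF n : LinearMap.ker ((cochainsMap (MonoidHom.id G) f).f n).hom =
      cochainsIn X (I • ⊤) n := by
    rw [ker_cochainsMap_f, hker]
  rintro c ⟨hc, hcJ⟩
  obtain ⟨c₀, hc₀⟩ := exists_sub_smul_mem_cochainsIn hcJ
  have hdc₀ : ((inhomogeneousCochains X).d i k).hom c₀ ∈ cochainsIn X (I • ⊤) k := by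
    have h : ((inhomogeneousCochains X).d i k).hom (t • c₀) =
        -((inhomogeneousCochains X).d i k).hom (c - t • c₀) := by
      rw [map_sub, LinearMap.mem_ker.mp hc, zero_sub, neg_neg]
    rw [← smul_mem_cochainsIn_iff b ht, ← map_smul, h]
    exact neg_mem (d_mem_cochainsIn (map_ρ_ideal_smul_top_le (A := X) K) hc₀)
  have hfc₀ : ((cochainsMap (MonoidHom.id G) f).f i).hom c₀ ∈
      LinearMap.ker ((inhomogeneousCochains Y).d i k).hom := by
    rw [LinearMap.mem_ker, ← cochainsMap_f_d_apply, ← LinearMap.mem_ker, hkerF]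
    exact hdc₀
  obtain ⟨bY, hbY⟩ := hY hfc₀
  obtain ⟨b₀, rfl⟩ := surjective_cochainsMap_f hsurj j bY
  have hb₀ : t • (c₀ - ((inhomogeneousCochains X).d j i).hom b₀) ∈ cochainsIn X (K • ⊤) i := by
    rw [smul_mem_cochainsIn_iff b ht, ← hkerF, LinearMap.mem_ker, map_sub,
      cochainsMap_f_d_apply, hbY, sub_self]
  have hc₁ : c - t • ((inhomogeneousCochains X).d j i).hom b₀ ∈
      LinearMap.ker ((inhomogeneousCochains X).d i k).hom ⊓ cochainsIn X (K • ⊤) i := by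
    refine ⟨?_, ?_⟩
    · rw [SetLike.mem_coe, LinearMap.mem_ker, map_sub, map_smul, d_d_apply, smul_zero, sub_zero]
      exact hc
    · rw [← sub_add_sub_cancel _ (t • c₀), ← smul_sub]
      exact add_mem hc₀ hb₀
  obtain ⟨b₁, hb₁⟩ := hK hc₁
  exact ⟨t • b₀ + b₁, by rw [map_add, map_smul, hb₁, add_sub_cancel]⟩

theorem ker_inf_cochainsIn_le_range [IsArtinianRing R] [IsLocalRing R] (b : Module.Basis ι R X)
    (hsurj : Function.Surjective f.hom)
    (hker : LinearMap.ker f.hom.toLinearMap = IsLocalRing.maximalIdeal R • ⊤)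
    (hY : LinearMap.ker ((inhomogeneousCochains Y).d i k).hom ≤
      LinearMap.range ((inhomogeneousCochains Y).d j i).hom) (J : Ideal R) :
    LinearMap.ker ((inhomogeneousCochains X).d i k).hom ⊓ cochainsIn X (J • ⊤) i ≤
      LinearMap.range ((inhomogeneousCochains X).d j i).hom := by
  induction J using WellFoundedLT.induction with
  | ind J IH =>
  rcases eq_or_ne J ⊥ with rfl | hJ
  · rw [Submodule.bot_smul, cochainsIn_bot, inf_bot_eq]
    exact bot_le
  obtain ⟨K, hKJ⟩ := Ideal.exists_covBy_of_ne_bot hJ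
  obtain ⟨t, htJ, htK⟩ := SetLike.exists_of_lt hKJ.lt
  rw [← Ideal.sup_span_singleton_eq_of_covBy hKJ htJ htK]
  exact ker_inf_cochainsIn_sup_span_singleton_le_range b hsurj hker hY
    (Ideal.mul_mem_iff_mem_maximalIdeal_of_covBy hKJ htJ htK) (IH K hKJ.lt)

end groupCohomology

/-- Let `R` be a commutative Artinian local ring with maximal ideal `m`,
`G` a group and `X` a representation of `G` over `R` whose underlying `R`-module is free.
If `H^i(G, X/mX)` vanishes then `H^i(G, X)` vanishes.  Here the quotient `X/mX` is
formalized as any representation `Y` equipped with a `G`-equivariant surjection `f : X ⟶ Y`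
whose kernel is `m • X`. -/
theorem stmt0 (R : Type) [CommRing R] [IsArtinianRing R] [IsLocalRing R]
    (G : Type) [Group G] (X Y : Rep R G) [Module.Free R X]
    (f : X ⟶ Y) (hsurj : Function.Surjective f.hom)
    (hker : LinearMap.ker f.hom.toLinearMap = (IsLocalRing.maximalIdeal R) • (⊤ : Submodule R X))
    (i : ℕ) (hvan : Subsingleton (groupCohomology Y i)) :
    Subsingleton (groupCohomology X i) := by
  rw [subsingleton_groupCohomology_iff] at hvan ⊢
  simpa only [Submodule.top_smul, cochainsIn_top, inf_top_eq] using
    ker_inf_cochainsIn_le_range (Module.Free.chooseBasis R X) hsurj hker hvan ⊤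
end

section
/- Let O be a discrete valuation ring with uniformizer ϖ, let G be a group, and let T be an O-module that is finitely generated and free over O and is equipped with an O-linear action of G. If the group cohomology H^0(G, T/ϖT) vanishes, then H^0(G, T) vanishes and the O-module H^1(G, T) is torsion-free. -/
/-!
Since `H⁰(G, T/ϖT) = 0`, an element of `T` that is invariant modulo `ϖ` reduces to zero, i.e. is
divisible by `ϖ`. If `x = ϖ y` is invariant then so is `y`, as `ϖ` is a non-zero-divisor on `T`;
hence `Tᴳ = ϖ Tᴳ` and Nakayama gives `Tᴳ = 0`. If `z` is a 1-cocycle with `ϖ z = d t`, then `t`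
is invariant modulo `ϖ`, so `t = ϖ s` and `z = d s`: multiplication by `ϖ` is injective on
`H¹(G, T)`. Over a DVR every nonzero scalar is a unit times a power of `ϖ`, so `H¹(G, T)` is
torsion-free.
-/

open CategoryTheory groupCohomology IsLocalRing

theorem IsDiscreteValuationRing.isTorsionFree_of_isSMulRegular {R M : Type*} [CommRing R]
    [IsDomain R] [IsDiscreteValuationRing R] [AddCommGroup M] [Module R M] {ϖ : R}
    (hϖ : Irreducible ϖ) (hM : IsSMulRegular M ϖ) : Module.IsTorsionFree R M where
  isSMulRegular r hr := by
    obtain ⟨n, u, rfl⟩ := eq_unit_mul_pow_irreducible hr.ne_zero hϖ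
    exact (u.isUnit.isSMulRegular M).mul (hM.pow n)

namespace groupCohomology

universe u
variable {k G : Type u} [CommRing k] [Group G] {A B : Rep k G}

theorem subsingleton_H0_iff : Subsingleton (H0 A) ↔ A.ρ.invariants = ⊥ := by
  rw [← Submodule.subsingleton_iff_eq_bot]
  exact (H0Iso A).toLinearEquiv.toEquiv.subsingleton_congr

variable {ϖ : k} (f : A ⟶ B) (hker : LinearMap.ker f.hom.toLinearMap = Ideal.span {ϖ} • ⊤)
include hker

theorem exists_smul_eq_of_forall_sub_mem_ker (hB : B.ρ.invariants = ⊥) {t : A}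
    (ht : ∀ g, A.ρ g t - t ∈ LinearMap.ker f.hom.toLinearMap) : ∃ s, ϖ • s = t := by
  have hft : f.hom t ∈ B.ρ.invariants := fun g => by
    simpa [sub_eq_zero, Rep.hom_comm_apply] using ht g
  rw [hB, Submodule.mem_bot] at hft
  have htk : t ∈ LinearMap.ker f.hom.toLinearMap := hft
  rw [hker, Submodule.ideal_span_singleton_smul] at htk
  exact (Submodule.mem_smul_pointwise_iff_exists _ _ _).1 htk |>.imp fun s hs => hs.2

theorem invariants_le_smul_invariants (hB : B.ρ.invariants = ⊥) (hA : IsSMulRegular A ϖ) :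
    A.ρ.invariants ≤ Ideal.span {ϖ} • A.ρ.invariants := by
  intro x hx
  obtain ⟨s, rfl⟩ := exists_smul_eq_of_forall_sub_mem_ker f hker hB (t := x) fun g => by
    simp [hx g]
  have hs : s ∈ A.ρ.invariants := fun g =>
    hA <| (map_smul (A.ρ g) ϖ s).symm.trans (hx g)
  exact Submodule.smul_mem_smul (Ideal.mem_span_singleton_self ϖ) hs

theorem invariants_eq_bot_of_ker_eq [IsNoetherianRing k] [IsLocalRing k] [Module.Finite k A]
    (hϖ : ϖ ∈ maximalIdeal k) (hB : B.ρ.invariants = ⊥) (hA : IsSMulRegular A ϖ) :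
    A.ρ.invariants = ⊥ :=
  Submodule.eq_bot_of_le_smul_of_le_jacobson_bot _ _ (IsNoetherian.noetherian _)
    (invariants_le_smul_invariants f hker hB hA)
    (((Ideal.span_singleton_le_iff_mem _).2 hϖ).trans (maximalIdeal_le_jacobson ⊥))

theorem isSMulRegular_H1 (hB : B.ρ.invariants = ⊥) (hA : IsSMulRegular A ϖ) :
    IsSMulRegular (H1 A) ϖ := by
  refine .of_right_eq_zero_of_smul fun x hx => ?_
  induction x using H1_induction_on with | h z => ?_
  rw [← map_smul, H1π_eq_zero_iff] at hx
  rw [H1π_eq_zero_iff]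
  obtain ⟨t, ht⟩ := hx
  obtain ⟨s, rfl⟩ := exists_smul_eq_of_forall_sub_mem_ker f hker hB (t := t) fun g => by
    rw [← d₀₁_hom_apply, ht, hker, Submodule.ideal_span_singleton_smul]
    exact Submodule.smul_mem_pointwise_smul _ _ _ trivial
  refine ⟨s, funext fun g => hA ?_⟩
  show ϖ • (A.ρ g s - s) = ϖ • z g
  rw [smul_sub, ← map_smul]
  exact congrFun ht g

end groupCohomology

theorem stmt2_general (O : Type) [CommRing O] [IsDomain O] [IsDiscreteValuationRing O]
    (ϖ : O) (hϖ : Irreducible ϖ)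
    (G : Type) [Group G] (T Tbar : Rep O G)
    [Module.Free O T] [Module.Finite O T]
    (f : T ⟶ Tbar)
    (hker : LinearMap.ker f.hom.toLinearMap = Ideal.span {ϖ} • (⊤ : Submodule O T))
    (h0 : Subsingleton (groupCohomology Tbar 0)) :
    Subsingleton (groupCohomology T 0) ∧
      NoZeroSMulDivisors O (groupCohomology T 1) := by
  have hTbar : Tbar.ρ.invariants = ⊥ := subsingleton_H0_iff.1 h0
  have hT : IsSMulRegular T ϖ := .of_ne_zero hϖ.ne_zero
  refine ⟨subsingleton_H0_iff.2 (invariants_eq_bot_of_ker_eq f hker hϖ.not_isUnit hTbar hT), ?_⟩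
  have := IsDiscreteValuationRing.isTorsionFree_of_isSMulRegular hϖ
    (isSMulRegular_H1 f hker hTbar hT)
  exact ⟨smul_eq_zero.1⟩

/-- Let `O` be a discrete valuation ring with uniformizer `ϖ`, `G` a group
and `T` a representation of `G` over `O` that is finitely generated and free as an `O`-module.
If `H^0(G, T/ϖT)` vanishes then `H^0(G, T)` vanishes and `H^1(G, T)` is a torsion-free
`O`-module.  Here the quotient `T/ϖT` is formalized as any representation `Tbar` equipped
with a `G`-equivariant surjection `f : T ⟶ Tbar` whose kernel is `ϖ • T`. -/
theorem stmt2 (O : Type) [CommRing O] [IsDomain O] [IsDiscreteValuationRing O]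
    (ϖ : O) (hϖ : Irreducible ϖ)
    (G : Type) [Group G] (T Tbar : Rep O G)
    [Module.Free O T] [Module.Finite O T]
    (f : T ⟶ Tbar) (hsurj : Function.Surjective f.hom)
    (hker : LinearMap.ker f.hom.toLinearMap = Ideal.span {ϖ} • (⊤ : Submodule O T))
    (h0 : Subsingleton (groupCohomology Tbar 0)) :
    Subsingleton (groupCohomology T 0) ∧
      NoZeroSMulDivisors O (groupCohomology T 1) :=
  stmt2_general O ϖ hϖ G T Tbar f hker h0
end

section
/- Let p be a prime number with p ≥ 5. Consider the action of SL₂(ℤ_p) on (ℤ/pℤ)² obtained by composing the reduction homomorphism SL₂(ℤ_p) → SL₂(ℤ/pℤ) (induced by the ring map ℤ_p → ℤ/pℤ) with the standard action of SL₂(ℤ/pℤ) by matrix-vector multiplication. Then the first group cohomology H¹(SL₂(ℤ_p), (ℤ/pℤ)²) vanishes. -/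
/-- The action of `SL₂(ℤ_p)` on `(ℤ/pℤ)²` obtained by composing reduction modulo `p`
with the standard action of `SL₂(ℤ/pℤ)` by matrix-vector multiplication. -/
noncomputable def stdModpRep (p : ℕ) [Fact p.Prime] :
    Representation (ZMod p) (Matrix.SpecialLinearGroup (Fin 2) ℤ_[p]) (Fin 2 → ZMod p) :=
  (LinearEquiv.automorphismGroup.toLinearMapMonoidHom (R := ZMod p)
      (M := Fin 2 → ZMod p)).comp
    ((Matrix.SpecialLinearGroup.toLin').comp
      (Matrix.SpecialLinearGroup.map (PadicInt.toZMod (p := p))))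

/-!
The central element `-1` of `SL₂(ℤ_p)` acts on `(ℤ/pℤ)²` as the scalar `-1`. For a 1-cocycle `f`,
comparing `f(zg)` with `f(gz)` for a central `z` gives `(ρ(g) - 1) f(z) = (ρ(z) - 1) f(g)`; when
`ρ(z)` is a scalar `c` with `c - 1` invertible, this exhibits `f` as the coboundary of
`(c - 1)⁻¹ f(z)`. Here `c - 1 = -2`, a unit in `ℤ/pℤ` since `p ≠ 2`.
-/

namespace groupCohomology

universe u

variable {k G : Type u} [CommRing k] [Group G] {A : Rep k G}

theorem cocycles₁_sub_eq_of_commute (f : cocycles₁ A) {z g : G} (h : Commute z g) :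
    A.ρ g (f z) - f z = A.ρ z (f g) - f g := by
  have hf := (mem_cocycles₁_iff f).1 f.2
  have hzg := hf z g
  rw [h.eq, hf g z] at hzg
  linear_combination (norm := module) hzg

theorem subsingleton_H1_of_mem_center_of_smul {z : G} (hz : z ∈ Subgroup.center G) {c : k}
    (hc : IsUnit (c - 1)) (hρ : ∀ v, A.ρ z v = c • v) : Subsingleton (H1 A) := by
  have mem_coboundaries (f : cocycles₁ A) : ⇑f ∈ coboundaries₁ A := by
    refine ⟨hc.unit⁻¹ • f z, funext fun g => ?_⟩
    have hcomm : Commute z g := (Subgroup.mem_center_iff.1 hz g).symm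
    rw [d₀₁_hom_apply, Units.smul_def, map_smul, ← smul_sub, cocycles₁_sub_eq_of_commute f hcomm,
      hρ]
    linear_combination (norm := module) hc.val_inv_mul • f g
  refine subsingleton_of_forall_eq 0 fun x => ?_
  induction x using H1_induction_on with
  | h f => exact (H1π_eq_zero_iff f).2 (mem_coboundaries f)

end groupCohomology

open Matrix.SpecialLinearGroup MatrixGroups in
theorem stdModpRep_neg_one (p : ℕ) [Fact p.Prime] (v : Fin 2 → ZMod p) :
    stdModpRep p (-1) v = -v := by
  have hmap : ((map (PadicInt.toZMod (p := p)) (-1) : SL(2, ZMod p)) :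
      Matrix (Fin 2) (Fin 2) (ZMod p)) = -1 := by
    rw [map_apply_coe, coe_neg, coe_one, map_neg, map_one]
  simp only [stdModpRep, MonoidHom.comp_apply,
    LinearEquiv.automorphismGroup.toLinearMapMonoidHom_apply, LinearEquiv.coe_coe, toLin'_apply,
    Matrix.toLin'_apply, hmap, Matrix.neg_mulVec, Matrix.one_mulVec]

/-- For a prime `p ≥ 5`, the first group cohomology
`H¹(SL₂(ℤ_p), (ℤ/pℤ)²)` vanishes, where `SL₂(ℤ_p)` acts on `(ℤ/pℤ)²` through reduction
modulo `p` followed by matrix-vector multiplication. -/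
theorem stmt5 (p : ℕ) [Fact p.Prime] (hp : 5 ≤ p) :
    Subsingleton (groupCohomology (Rep.of (stdModpRep p)) 1) := by
  have htwo : (2 : ZMod p) ≠ 0 :=
    Ring.two_ne_zero (by rw [ZMod.ringChar_zmod_n]; omega)
  have hunit : IsUnit ((-1 : ZMod p) - 1) := by
    rw [← neg_add', one_add_one_eq_two]
    exact htwo.isUnit.neg
  exact groupCohomology.subsingleton_H1_of_mem_center_of_smul (A := Rep.of (stdModpRep p))
    (Subgroup.mem_center_iff.2 fun g => (Commute.neg_one_left g).symm.eq) hunit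
    fun v => (stdModpRep_neg_one p v).trans (neg_one_smul _ v).symm
end

section
/- Let O be the valuation ring of a finite field extension of ℚ_p, let G be a finite abelian group, and let X₁ ⊆ X₂ be finitely generated O[G]-modules (X₁ an O[G]-submodule of X₂) such that the quotient X₂/X₁ is torsion-free as an O-module. Then the restriction map Hom_{O[G]}(X₂, O[G]) → Hom_{O[G]}(X₁, O[G]), sending a homomorphism to its restriction to X₁, is surjective. -/
/-!
For `G` finite, `O[G]`-linear maps `M → O[G]` correspond bijectively to `O`-linear maps `M → O`
(take the coefficient of `1`; conversely `ψ ↦ (x ↦ ∑ g, ψ (g⁻¹ x) g)`), compatibly with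
restriction. So it suffices to extend `O`-linear functionals from `X₁` to `X₂`. Every nonzero
prime of the Dedekind domain `O` lies over the maximal ideal of `ℤ_p`, so `O` has finitely many
primes and is a PID. Hence the finitely generated torsion-free quotient `X₂/X₁` is free, `X₁` is
an `O`-direct summand of `X₂`, and functionals on `X₁` extend.
-/

theorem isPrincipalIdealRing_of_isIntegral_of_isLocalRing (A B : Type*) [CommRing A]
    [IsLocalRing A] [IsDomain A] [CommRing B] [IsDedekindDomain B] [Algebra A B]
    [Module.IsTorsionFree A B] [Algebra.IsIntegral A B] : IsPrincipalIdealRing B :=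
  IsPrincipalIdealRing.of_finite_maximals <|
    (IsDedekindDomain.primesOver_finite (IsLocalRing.maximalIdeal A) B).subset fun P hP =>
      have := Ideal.isMaximal_comap_of_isIntegral_of_isMaximal (R := A) P (hI := hP)
      ⟨hP.isPrime, ⟨(IsLocalRing.eq_maximalIdeal this).symm⟩⟩

theorem IsIntegralClosure.isPrincipalIdealRing (A K L C : Type*) [CommRing A] [Field K]
    [Algebra A K] [IsFractionRing A K] [Field L] [CommRing C] [Algebra K L] [Algebra A L]
    [IsScalarTower A K L] [Algebra C L] [IsIntegralClosure C A L] [Algebra A C]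
    [IsScalarTower A C L] [FiniteDimensional K L] [Algebra.IsSeparable K L]
    [IsDedekindDomain A] [IsLocalRing A] : IsPrincipalIdealRing C :=
  have : FaithfulSMul A L := .trans A K L
  have : Module.IsTorsionFree A C := IsIntegralClosure.isTorsionFree A L
  have : IsDomain C := (IsIntegralClosure.algebraMap_injective C A L).isDomain _
  have : IsDedekindDomain C := IsIntegralClosure.isDedekindDomain A K L C
  have : Algebra.IsIntegral A C := IsIntegralClosure.isIntegral_algebra A L
  isPrincipalIdealRing_of_isIntegral_of_isLocalRing A C

namespace Submodule

variable {R M : Type*} [Ring R] [AddCommGroup M] [Module R M]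

theorem isTorsionFree_quotient [Nontrivial R] (N : Submodule R M)
    (h : ∀ (c : R) (x : M), c ≠ 0 → c • x ∈ N → x ∈ N) : Module.IsTorsionFree R (M ⧸ N) :=
  .of_smul_eq_zero fun c y hy => by
    induction y using Quotient.induction_on
    rw [← Quotient.mk_smul, Quotient.mk_eq_zero] at hy
    rw [Quotient.mk_eq_zero, or_iff_not_imp_left]
    exact fun hc => h c _ hc hy

theorem surjective_comp_subtype {P : Type*} [AddCommGroup P] [Module R P] (N : Submodule R M)
    [Module.Projective R (M ⧸ N)] : Function.Surjective fun φ : M →ₗ[R] P => φ ∘ₗ N.subtype := by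
  obtain ⟨r, hr⟩ := ((Function.Exact.split_tfae (LinearMap.exact_subtype_mkQ N)
    N.injective_subtype N.mkQ_surjective).out 0 1).mp
    (Module.projective_lifting_property N.mkQ LinearMap.id N.mkQ_surjective)
  exact fun φ => ⟨φ ∘ₗ r, by dsimp only; rw [LinearMap.comp_assoc, hr, LinearMap.comp_id]⟩

end Submodule

namespace MonoidAlgebra

variable {R G M : Type*} [CommSemiring R] [Group G] [Fintype G] [AddCommMonoid M]
  [Module (MonoidAlgebra R G) M] [Module R M] [IsScalarTower R (MonoidAlgebra R G) M]

noncomputable def dualLift (ψ : Module.Dual R M) : M →ₗ[MonoidAlgebra R G] MonoidAlgebra R G :=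
  equivariantOfLinearOfComm (∑ g : G, lsingle g ∘ₗ ψ ∘ₗ GroupSMul.linearMap R M g⁻¹) fun h x => by
    simp only [LinearMap.sum_apply, Finset.smul_sum]
    exact Fintype.sum_equiv (Equiv.mulLeft h⁻¹) _ _ fun g => by simp [← mul_smul]

theorem coeff_dualLift_apply (ψ : Module.Dual R M) (x : M) (g : G) :
    (dualLift ψ x).coeff g = ψ (single g⁻¹ (1 : R) • x) := by
  classical
  simp [dualLift, Finsupp.single_apply]

variable (G) in
noncomputable def dualEquiv : (M →ₗ[MonoidAlgebra R G] MonoidAlgebra R G) ≃ Module.Dual R M where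
  toFun f := Finsupp.lapply 1 ∘ₗ (coeffLinearEquiv R).toLinearMap ∘ₗ f.restrictScalars R
  invFun := dualLift
  left_inv f := by
    ext x g
    simp [coeff_dualLift_apply]
  right_inv ψ := by
    ext x
    simp [coeff_dualLift_apply, ← one_def]

variable {N : Type*} [AddCommMonoid N] [Module (MonoidAlgebra R G) N] [Module R N]
  [IsScalarTower R (MonoidAlgebra R G) N]

theorem dualEquiv_comp (f : M →ₗ[MonoidAlgebra R G] MonoidAlgebra R G)
    (u : N →ₗ[MonoidAlgebra R G] M) : dualEquiv G (f ∘ₗ u) = dualEquiv G f ∘ₗ u.restrictScalars R :=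
  rfl

theorem surjective_comp_of_surjective_comp_restrictScalars
    (u : N →ₗ[MonoidAlgebra R G] M)
    (hu : Function.Surjective fun φ : Module.Dual R M => φ ∘ₗ u.restrictScalars R) :
    Function.Surjective fun f : M →ₗ[MonoidAlgebra R G] MonoidAlgebra R G => f ∘ₗ u := by
  intro f
  obtain ⟨φ, hφ⟩ := hu (dualEquiv G f)
  exact ⟨(dualEquiv G).symm φ, (dualEquiv G).injective <| by simpa [dualEquiv_comp] using hφ⟩

end MonoidAlgebra

theorem stmt9_general (p : ℕ) [Fact p.Prime]
    (Q : Type) [Field Q] [Algebra ℚ_[p] Q] [FiniteDimensional ℚ_[p] Q]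
    (O : Type) [CommRing O] [Algebra O Q] [Algebra ℤ_[p] O] [Algebra ℤ_[p] Q]
    [IsScalarTower ℤ_[p] O Q] [IsScalarTower ℤ_[p] ℚ_[p] Q]
    [IsIntegralClosure O ℤ_[p] Q]
    (G : Type) [CommGroup G] [Fintype G]
    (X₂ : Type) [AddCommGroup X₂] [Module (MonoidAlgebra O G) X₂]
    [Module.Finite (MonoidAlgebra O G) X₂]
    [Module O X₂] [IsScalarTower O (MonoidAlgebra O G) X₂]
    (X₁ : Submodule (MonoidAlgebra O G) X₂)
    (htf : ∀ (c : O) (x : X₂), c ≠ 0 → c • x ∈ X₁ → x ∈ X₁) :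
    Function.Surjective
      (fun f : X₂ →ₗ[MonoidAlgebra O G] MonoidAlgebra O G => f ∘ₗ X₁.subtype) := by
  have : IsDomain O := (IsIntegralClosure.algebraMap_injective O ℤ_[p] Q).isDomain _
  have : IsPrincipalIdealRing O := IsIntegralClosure.isPrincipalIdealRing ℤ_[p] ℚ_[p] Q O
  have : Module.Finite O X₂ := .trans (MonoidAlgebra O G) X₂
  have : Module.IsTorsionFree O (X₂ ⧸ X₁.restrictScalars O) :=
    (X₁.restrictScalars O).isTorsionFree_quotient htf
  have : Module.Free O (X₂ ⧸ X₁.restrictScalars O) := Module.free_of_finite_type_torsion_free'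
  exact MonoidAlgebra.surjective_comp_of_surjective_comp_restrictScalars X₁.subtype
    (X₁.restrictScalars O).surjective_comp_subtype

/-- Let `O` be the valuation ring (integral closure of `ℤ_p`) of a finite
extension `Q` of `ℚ_p` and `G` a finite abelian group.  Let `X₁ ⊆ X₂` be finitely generated
`O[G]`-modules such that the quotient `X₂/X₁` is torsion-free over `O` (formalized as:
`c • x ∈ X₁` with `c ≠ 0` implies `x ∈ X₁`).  Then restriction
`Hom_{O[G]}(X₂, O[G]) → Hom_{O[G]}(X₁, O[G])` is surjective. -/
theorem stmt9 (p : ℕ) [Fact p.Prime]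
    (Q : Type) [Field Q] [Algebra ℚ_[p] Q] [FiniteDimensional ℚ_[p] Q]
    (O : Type) [CommRing O] [Algebra O Q] [Algebra ℤ_[p] O] [Algebra ℤ_[p] Q]
    [IsScalarTower ℤ_[p] O Q] [IsScalarTower ℤ_[p] ℚ_[p] Q]
    [IsIntegralClosure O ℤ_[p] Q]
    (G : Type) [CommGroup G] [Fintype G]
    (X₂ : Type) [AddCommGroup X₂] [Module (MonoidAlgebra O G) X₂]
    [Module.Finite (MonoidAlgebra O G) X₂]
    [Module O X₂] [IsScalarTower O (MonoidAlgebra O G) X₂]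
    (X₁ : Submodule (MonoidAlgebra O G) X₂) (hX₁ : X₁.FG)
    (htf : ∀ (c : O) (x : X₂), c ≠ 0 → c • x ∈ X₁ → x ∈ X₁) :
    Function.Surjective
      (fun f : X₂ →ₗ[MonoidAlgebra O G] MonoidAlgebra O G => f ∘ₗ X₁.subtype) :=
  stmt9_general p Q O G X₂ X₁ htf
end
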